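/- arXiv:2106.02538 — 2 statements merged into one kernel-verified Lean document; each statement's English description precedes it below -/
import Mathlib

section
/- Let f : [0,∞) → [0,∞) be a superadditive function. Then for all persistence diagrams X, Y, Z, the f-Prokhorov distance satisfies the triangle inequality π_f(X,Z) ≤ π_f(X,Y) + π_f(Y,Z). -/
open scoped ENNReal Classical

/-- A persistence diagram: a finite multiset of points strictly above the diagonal of `ℝ²`.
Distances in `ℝ × ℝ` are measured by the product (sup-norm, i.e. `p = ∞`) metric `dist`. -/
structure PD where
  pts : Multiset (ℝ × ℝ)
  birth_lt_death : ∀ x ∈ pts, x.1 < x.2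

/-- Orthogonal projection of a point onto the diagonal `Δ = {(t, t) : t ∈ ℝ}`. -/
noncomputable def diagProj (x : ℝ × ℝ) : ℝ × ℝ := ((x.1 + x.2) / 2, (x.1 + x.2) / 2)

/-- The distance of a matched pair: a pair of two diagonal points counts as distance `0`,
otherwise the distance in `ℝ × ℝ` is used. -/
noncomputable def pairCost (u v : ℝ × ℝ) : ℝ :=
  if u.1 = u.2 ∧ v.1 = v.2 then 0 else dist u v

/-- `P` encodes a matching, i.e. a bijection `η : X₀ ⊔ Y₀' → Y₀ ⊔ X₀'`, as the multiset of
matched pairs `(u, η u)`: its first marginal is `X₀ ⊔ Y₀'` and its second is `Y₀ ⊔ X₀'`. -/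
def IsMatching (X Y : PD) (P : Multiset ((ℝ × ℝ) × (ℝ × ℝ))) : Prop :=
  P.map Prod.fst = X.pts + Y.pts.map diagProj ∧
  P.map Prod.snd = Y.pts + X.pts.map diagProj

/-- The bottleneck profile `D_{X,Y}(t) = inf_η |{u : d(u, η u) > t}|`. -/
noncomputable def bprofile (X Y : PD) (t : ℝ) : ℝ≥0∞ :=
  ⨅ P : {P : Multiset ((ℝ × ℝ) × (ℝ × ℝ)) // IsMatching X Y P},
    ((Multiset.countP (fun uv => t < pairCost uv.1 uv.2) P.1 : ℕ) : ℝ≥0∞)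

/-- The `f`-Prokhorov distance `π_f(X,Y) = inf {t > 0 : D_{X,Y}(t) < f(t)}`
(with value `∞` if no such `t` exists). -/
noncomputable def prokhorov (f : ℝ → ℝ) (X Y : PD) : ℝ≥0∞ :=
  ⨅ t : {t : ℝ // 0 < t ∧ bprofile X Y t < ENNReal.ofReal (f t)}, ENNReal.ofReal t.1

/-!
Chain a matching `P` of `X, Y` with a matching `Q` of `Y, Z`: after padding both with trivial
pairs `(z', z')`, `(x', x')` their middle marginals agree, so they glue into triples
`(u, v, w)`. Each triple is shortcut to pairs of a matching of `X` and `Z`: `(u, w)` (plus the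
free pair `(w', u')`) when neither end is diagonal, otherwise the off-diagonal end with its own
projection, which in the sup metric is at least as close as any diagonal point. A shortcut has
at most one pair of positive cost, and that cost is at most `d(u, v) + d(v, w)`, so
`D_{X,Z}(s + t) ≤ D_{X,Y}(s) + D_{Y,Z}(t)`. Superadditivity of `f` then turns admissible radii
`s` for `(X, Y)` and `t` for `(Y, Z)` into the admissible radius `s + t` for `(X, Z)`.
-/

open Multiset

theorem Multiset.exists_map_eq_of_map_snd_eq_map_fst {α β γ : Type*}
    (A : Multiset (α × β)) (B : Multiset (β × γ)) (h : A.map Prod.snd = B.map Prod.fst) :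
    ∃ T : Multiset (α × β × γ), T.map (fun t => (t.1, t.2.1)) = A ∧ T.map Prod.snd = B := by
  classical
  induction A using Multiset.induction generalizing B with
  | empty => exact ⟨0, rfl, by simpa [eq_comm] using h⟩
  | cons a A ih =>
    obtain ⟨b, hbB, hb⟩ : ∃ b ∈ B, b.1 = a.2 :=
      mem_map.mp (h ▸ mem_map_of_mem Prod.snd (mem_cons_self a A))
    have hrest : A.map Prod.snd = (B.erase b).map Prod.fst := by
      rw [← cons_erase hbB, map_cons, map_cons, hb] at h
      exact (cons_inj_right _).mp h
    obtain ⟨T, hTA, hTB⟩ := ih _ hrest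
    exact ⟨(a.1, b) ::ₘ T, by simp [hTA, hb], by simp [hTB, cons_erase hbB]⟩

theorem Multiset.countP_bind_le {α β : Type*} (s : Multiset α) (g : α → Multiset β)
    (p : β → Prop) (q r : α → Prop) [DecidablePred p] [DecidablePred q] [DecidablePred r]
    (h : ∀ a ∈ s, (g a).countP p ≤ (if q a then 1 else 0) + (if r a then 1 else 0)) :
    (s.bind g).countP p ≤ s.countP q + s.countP r := by
  induction s using Multiset.induction with
  | empty => simp
  | cons a s ih =>
    have ha := h a (mem_cons_self a s)
    have hs := ih fun b hb => h b (mem_cons_of_mem hb)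
    rw [cons_bind, countP_add, countP_cons, countP_cons]
    omega

lemma dist_diagProj_le (u v : ℝ × ℝ) (hv : v.1 = v.2) : dist u (diagProj u) ≤ dist u v := by
  obtain ⟨a, b⟩ := u
  obtain ⟨c, c'⟩ := v
  obtain rfl : c = c' := hv
  have hproj : dist (a, b) (diagProj (a, b)) = |a - b| / 2 := by
    simp only [diagProj, Prod.dist_eq, Real.dist_eq]
    rw [show a - (a + b) / 2 = (a - b) / 2 by ring, show b - (a + b) / 2 = -((a - b) / 2) by ring,
      abs_neg, max_self, abs_div, abs_two]
  have hmid : |a - b| ≤ |a - c| + |b - c| := by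
    simpa [abs_sub_comm b c] using abs_sub_le a c b
  rw [hproj, Prod.dist_eq, Real.dist_eq, Real.dist_eq]
  linarith [le_max_left |a - c| |b - c|, le_max_right |a - c| |b - c|]

section pairCost

variable {u v w : ℝ × ℝ}

lemma pairCost_comm (u v : ℝ × ℝ) : pairCost u v = pairCost v u := by
  simp only [pairCost, and_comm, dist_comm]

lemma pairCost_nonneg (u v : ℝ × ℝ) : 0 ≤ pairCost u v := by
  unfold pairCost
  split_ifs
  exacts [le_rfl, dist_nonneg]

lemma pairCost_diagProj (u v : ℝ × ℝ) : pairCost (diagProj u) (diagProj v) = 0 :=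
  if_pos ⟨rfl, rfl⟩

lemma pairCost_eq_dist_of_left_ne (hu : u.1 ≠ u.2) : pairCost u v = dist u v :=
  if_neg fun h => hu h.1

lemma pairCost_eq_dist_of_right_ne (hv : v.1 ≠ v.2) : pairCost u v = dist u v :=
  if_neg fun h => hv h.2

lemma dist_le_pairCost_add (hu : u.1 ≠ u.2) (hw : w.1 ≠ w.2) :
    dist u w ≤ pairCost u v + pairCost v w := by
  rw [pairCost_eq_dist_of_left_ne hu, pairCost_eq_dist_of_right_ne hw]
  exact dist_triangle u v w

lemma dist_diagProj_le_pairCost_add_of_left_eq (hu : u.1 = u.2) (hw : w.1 ≠ w.2) :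
    dist w (diagProj w) ≤ pairCost u v + pairCost v w := by
  by_cases hv : v.1 = v.2
  · calc dist w (diagProj w) ≤ dist w v := dist_diagProj_le w v hv
      _ = pairCost v w := by rw [pairCost_eq_dist_of_right_ne hw, dist_comm]
      _ ≤ pairCost u v + pairCost v w := le_add_of_nonneg_left (pairCost_nonneg u v)
  · calc dist w (diagProj w) ≤ dist u w := by rw [dist_comm u]; exact dist_diagProj_le w u hu
      _ ≤ dist u v + dist v w := dist_triangle u v w
      _ = pairCost u v + pairCost v w := by
        rw [pairCost_eq_dist_of_right_ne hv, pairCost_eq_dist_of_left_ne hv]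

lemma dist_diagProj_le_pairCost_add_of_right_eq (hu : u.1 ≠ u.2) (hw : w.1 = w.2) :
    dist u (diagProj u) ≤ pairCost u v + pairCost v w := by
  rw [add_comm, pairCost_comm u, pairCost_comm v]
  exact dist_diagProj_le_pairCost_add_of_left_eq hw hu

end pairCost

noncomputable def shortcut (u w : ℝ × ℝ) : Multiset ((ℝ × ℝ) × (ℝ × ℝ)) :=
  if u.1 = u.2 then
    if w.1 = w.2 then 0 else {(diagProj w, w)}
  else
    if w.1 = w.2 then {(u, diagProj u)} else {(u, w), (diagProj w, diagProj u)}

lemma countP_shortcut_le {r : ℝ} (hr : 0 ≤ r) (u v w : ℝ × ℝ) :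
    (shortcut u w).countP (fun uv => r < pairCost uv.1 uv.2) ≤
      if r < pairCost u v + pairCost v w then 1 else 0 := by
  have hmono : ∀ x, x ≤ pairCost u v + pairCost v w →
      (if r < x then 1 else 0) ≤ if r < pairCost u v + pairCost v w then 1 else 0 := by
    intro x hx
    split_ifs with h₁ h₂ <;> first | omega | exact absurd (h₁.trans_le hx) h₂
  by_cases hu : u.1 = u.2 <;> by_cases hw : w.1 = w.2 <;>
    simp only [shortcut, hu, hw, if_true, if_false, insert_eq_cons, ← cons_zero, countP_cons,
      countP_zero, zero_add]
  · exact Nat.zero_le _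
  · exact hmono _ ((pairCost_eq_dist_of_right_ne hw).trans_le
      (by rw [dist_comm]; exact dist_diagProj_le_pairCost_add_of_left_eq hu hw))
  · exact hmono _ ((pairCost_eq_dist_of_left_ne hu).trans_le
      (dist_diagProj_le_pairCost_add_of_right_eq hu hw))
  · rw [pairCost_diagProj, if_neg hr.not_gt, zero_add]
    exact hmono _ ((pairCost_eq_dist_of_left_ne hu).trans_le (dist_le_pairCost_add hu hw))

lemma map_bind_shortcut {ι : Type*} (T : Multiset ι) (u w : ι → ℝ × ℝ) :
    (T.bind fun i => shortcut (u i) (w i)).map Prod.fst =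
        (T.map u).filter (fun x => x.1 ≠ x.2)
          + ((T.map w).filter (fun x => x.1 ≠ x.2)).map diagProj ∧
      (T.bind fun i => shortcut (u i) (w i)).map Prod.snd =
        (T.map w).filter (fun x => x.1 ≠ x.2)
          + ((T.map u).filter (fun x => x.1 ≠ x.2)).map diagProj := by
  induction T using Multiset.induction with
  | empty => simp
  | cons i T ih =>
    rw [cons_bind, Multiset.map_add, Multiset.map_add, ih.1, ih.2]
    by_cases hu : (u i).1 = (u i).2 <;> by_cases hw : (w i).1 = (w i).2 <;>
      simp only [shortcut, hu, hw, ↓reduceIte, insert_eq_cons, ← singleton_add, Multiset.map_zero,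
        Multiset.map_add, map_singleton, Multiset.zero_add, filter_add, filter_singleton, ne_eq,
        not_true_eq_false, not_false_eq_true, empty_eq_zero, and_self] <;>
      constructor <;> abel

lemma filter_pts_add_map_diagProj (W : PD) (A : Multiset (ℝ × ℝ)) :
    (W.pts + A.map diagProj).filter (fun x => x.1 ≠ x.2) = W.pts := by
  rw [filter_add, filter_eq_self.mpr fun x hx => (W.birth_lt_death x hx).ne, add_eq_left,
    filter_eq_nil]
  simp only [mem_map, ne_eq, not_not]
  rintro _ ⟨x, -, rfl⟩
  rfl

lemma isMatching_bind_shortcut {ι : Type*} {X Z : PD} {A B : Multiset (ℝ × ℝ)}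
    {T : Multiset ι} {u w : ι → ℝ × ℝ}
    (hu : T.map u = X.pts + A.map diagProj) (hw : T.map w = Z.pts + B.map diagProj) :
    IsMatching X Z (T.bind fun i => shortcut (u i) (w i)) := by
  rw [IsMatching, (map_bind_shortcut T u w).1, (map_bind_shortcut T u w).2, hu, hw,
    filter_pts_add_map_diagProj, filter_pts_add_map_diagProj]
  exact ⟨rfl, rfl⟩

lemma ite_add_lt_le {s t a b : ℝ} :
    (if s + t < a + b then 1 else 0) ≤ (if s < a then 1 else 0) + (if t < b then 1 else 0) := by
  split_ifs <;> first | omega | linarith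

lemma countP_bind_shortcut_le (T : Multiset ((ℝ × ℝ) × (ℝ × ℝ) × (ℝ × ℝ))) {s t : ℝ}
    (hs : 0 ≤ s) (ht : 0 ≤ t) :
    (T.bind fun x => shortcut x.1 x.2.2).countP (fun uw => s + t < pairCost uw.1 uw.2) ≤
      (T.map fun x => (x.1, x.2.1)).countP (fun uv => s < pairCost uv.1 uv.2) +
        (T.map Prod.snd).countP (fun vw => t < pairCost vw.1 vw.2) := by
  rw [countP_map, countP_map, ← countP_eq_card_filter, ← countP_eq_card_filter]
  refine countP_bind_le _ _ _ _ _ fun x _ => ?_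
  exact (countP_shortcut_le (add_nonneg hs ht) x.1 x.2.1 x.2.2).trans ite_add_lt_le

lemma countP_add_map_diagProj_diagProj {r : ℝ} (hr : 0 ≤ r) (P : Multiset ((ℝ × ℝ) × (ℝ × ℝ)))
    (A : Multiset (ℝ × ℝ)) :
    (P + A.map fun a => (diagProj a, diagProj a)).countP (fun uv => r < pairCost uv.1 uv.2) =
      P.countP (fun uv => r < pairCost uv.1 uv.2) := by
  rw [countP_add, add_eq_left, countP_eq_zero]
  simp only [mem_map]
  rintro _ ⟨a, -, rfl⟩
  rw [pairCost_diagProj]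
  exact hr.not_gt

lemma IsMatching.exists_comp {X Y Z : PD} {P Q : Multiset ((ℝ × ℝ) × (ℝ × ℝ))}
    (hP : IsMatching X Y P) (hQ : IsMatching Y Z Q) {s t : ℝ} (hs : 0 ≤ s) (ht : 0 ≤ t) :
    ∃ M, IsMatching X Z M ∧ M.countP (fun uw => s + t < pairCost uw.1 uw.2) ≤
      P.countP (fun uv => s < pairCost uv.1 uv.2) +
        Q.countP (fun vw => t < pairCost vw.1 vw.2) := by
  set P' := P + Z.pts.map fun z => (diagProj z, diagProj z)
  set Q' := Q + X.pts.map fun x => (diagProj x, diagProj x)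
  have hmid : P'.map Prod.snd = Q'.map Prod.fst := by
    simp only [P', Q', Multiset.map_add, hP.2, hQ.1, map_map, Function.comp_def]
    abel
  obtain ⟨T, hTP, hTQ⟩ := exists_map_eq_of_map_snd_eq_map_fst P' Q' hmid
  have hfst : T.map (·.1) = X.pts + (Y.pts + Z.pts).map diagProj := by
    simpa [P', hP.1, map_map, Function.comp_def, add_assoc] using congrArg (map Prod.fst) hTP
  have hlast : T.map (·.2.2) = Z.pts + (Y.pts + X.pts).map diagProj := by
    simpa [Q', hQ.2, map_map, Function.comp_def, add_assoc] using congrArg (map Prod.snd) hTQ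
  refine ⟨_, isMatching_bind_shortcut hfst hlast, ?_⟩
  have hcount := countP_bind_shortcut_le T hs ht
  rwa [hTP, hTQ, countP_add_map_diagProj_diagProj hs, countP_add_map_diagProj_diagProj ht] at hcount

lemma bprofile_add_le (X Y Z : PD) {s t : ℝ} (hs : 0 ≤ s) (ht : 0 ≤ t) :
    bprofile X Z (s + t) ≤ bprofile X Y s + bprofile Y Z t :=
  ENNReal.le_iInf_add_iInf fun P Q => by
    obtain ⟨M, hM, hcount⟩ := P.2.exists_comp Q.2 hs ht
    exact (iInf_le _ ⟨M, hM⟩).trans (by exact_mod_cast hcount)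

lemma prokhorov_le {f : ℝ → ℝ} {X Y : PD} {r : ℝ} (hr : 0 < r)
    (hXY : bprofile X Y r < ENNReal.ofReal (f r)) : prokhorov f X Y ≤ ENNReal.ofReal r :=
  iInf_le (fun r : {r : ℝ // 0 < r ∧ bprofile X Y r < ENNReal.ofReal (f r)} =>
    ENNReal.ofReal r.1) ⟨r, hr, hXY⟩

theorem prokhorov_triangle_general (f : ℝ → ℝ)
    (hf_superadd : ∀ s t, 0 ≤ s → 0 ≤ t → f s + f t ≤ f (s + t))
    (X Y Z : PD) :
    prokhorov f X Z ≤ prokhorov f X Y + prokhorov f Y Z := by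
  refine ENNReal.le_iInf_add_iInf fun ⟨s, hs, hXY⟩ ⟨t, ht, hYZ⟩ => ?_
  have hfs : 0 < f s := ENNReal.ofReal_pos.mp (pos_of_gt hXY)
  have hft : 0 < f t := ENNReal.ofReal_pos.mp (pos_of_gt hYZ)
  have hXZ : bprofile X Z (s + t) < ENNReal.ofReal (f (s + t)) :=
    calc bprofile X Z (s + t) ≤ bprofile X Y s + bprofile Y Z t :=
          bprofile_add_le X Y Z hs.le ht.le
      _ < ENNReal.ofReal (f s) + ENNReal.ofReal (f t) := ENNReal.add_lt_add hXY hYZ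
      _ = ENNReal.ofReal (f s + f t) := (ENNReal.ofReal_add hfs.le hft.le).symm
      _ ≤ ENNReal.ofReal (f (s + t)) := ENNReal.ofReal_le_ofReal (hf_superadd s t hs.le ht.le)
  calc prokhorov f X Z ≤ ENNReal.ofReal (s + t) := prokhorov_le (add_pos hs ht) hXZ
    _ = ENNReal.ofReal s + ENNReal.ofReal t := ENNReal.ofReal_add hs.le ht.le

/-- The triangle inequality for the `f`-Prokhorov distance, for any superadditive
`f : [0,∞) → [0,∞)`. -/
theorem prokhorov_triangle (f : ℝ → ℝ)
    (hf_nonneg : ∀ t, 0 ≤ t → 0 ≤ f t)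
    (hf_superadd : ∀ s t, 0 ≤ s → 0 ≤ t → f s + f t ≤ f (s + t))
    (X Y Z : PD) :
    prokhorov f X Z ≤ prokhorov f X Y + prokhorov f Y Z :=
  prokhorov_triangle_general f hf_superadd X Y Z
end

section
/- Let p ≥ 1, q > 0, c > 0. The space of persistence diagrams in B̄ with finite p-th moment (i.e. those diagrams X with W_p(X, ∅) < ∞, where ∅ is the empty diagram), endowed with the (c·t^q)-Prokhorov distance π_{c t^q}, is separable: it contains a countable subset S such that every diagram in the space lies within π_{c t^q}-distance ε of some element of S, for every ε > 0. -/
open scoped ENNReal Classical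

/-- A diagram in the class `B̄`: a countable multiset of points in the closed half-plane
`{(b, d) : b ≤ d}` (represented as an `ℕ`-indexed family; points on the diagonal, of which
countably many copies are freely available for matching, are allowed and serve to pad
finite diagrams), such that for every `ε > 0` only finitely many points lie at distance
greater than `ε` from the diagonal `Δ`. -/
structure BarB where
  pts : ℕ → ℝ × ℝ
  birth_le_death : ∀ n, (pts n).1 ≤ (pts n).2
  finitePers : ∀ ε : ℝ, 0 < ε → {n | ε < dist (pts n) (diagProj (pts n))}.Finite

/-- The domain `X₀ ⊔ Y₀'` of a matching between diagrams `X, Y ∈ B̄`. -/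
noncomputable def matchDom (X Y : BarB) : ℕ ⊕ ℕ → ℝ × ℝ
  | Sum.inl n => X.pts n
  | Sum.inr n => diagProj (Y.pts n)

/-- The codomain `Y₀ ⊔ X₀'` of a matching between diagrams `X, Y ∈ B̄`. -/
noncomputable def matchCod (X Y : BarB) : ℕ ⊕ ℕ → ℝ × ℝ
  | Sum.inl n => Y.pts n
  | Sum.inr n => diagProj (X.pts n)

/-- The bottleneck profile `D_{X,Y}(t) = inf_η |{u : d(u, η u) > t}|` for diagrams in `B̄`;
matchings are bijections `η : X₀ ⊔ Y₀' → Y₀ ⊔ X₀'`. -/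
noncomputable def bprofileB (X Y : BarB) (t : ℝ) : ℝ≥0∞ :=
  ⨅ e : ℕ ⊕ ℕ ≃ ℕ ⊕ ℕ,
    ({i | t < pairCost (matchDom X Y i) (matchCod X Y (e i))}.encard : ℝ≥0∞)

/-- The `f`-Prokhorov distance `π_f(X,Y) = inf {t > 0 : D_{X,Y}(t) < f(t)}` on `B̄`. -/
noncomputable def prokhorovB (f : ℝ → ℝ) (X Y : BarB) : ℝ≥0∞ :=
  ⨅ t : {t : ℝ // 0 < t ∧ bprofileB X Y t < ENNReal.ofReal (f t)}, ENNReal.ofReal t.1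

/-- The indices of the off-diagonal points of a diagram in `B̄`. -/
def BarB.offDiag (X : BarB) : Set ℕ := {n | (X.pts n).1 < (X.pts n).2}

/-- Equality of diagrams in `B̄` as multisets of off-diagonal points: there is a bijection
between the off-diagonal points of `X` and those of `Y` matching equal points. -/
def BarB.MEquiv (X Y : BarB) : Prop :=
  ∃ σ : X.offDiag ≃ Y.offDiag, ∀ n : X.offDiag, Y.pts (σ n : ℕ) = X.pts (n : ℕ)

/-- The `p`-Wasserstein distance `W_p(X,Y) = inf_η (Σ_u d(u, η u)^p)^(1/p)` on `B̄`. -/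
noncomputable def wassersteinB (p : ℝ) (X Y : BarB) : ℝ≥0∞ :=
  ⨅ e : ℕ ⊕ ℕ ≃ ℕ ⊕ ℕ,
    (∑' i, ENNReal.ofReal (pairCost (matchDom X Y i) (matchCod X Y (e i)) ^ p)) ^ (1 / p)

/-- The empty persistence diagram, viewed in `B̄` (only diagonal padding points). -/
noncomputable def emptyB : BarB where
  pts _ := (0, 0)
  birth_le_death _ := le_refl 0
  finitePers ε hε := by
    have : {n : ℕ | ε < dist ((0 : ℝ), (0 : ℝ)) (diagProj (0, 0))} = ∅ := by
      ext n
      simp [diagProj]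
      linarith
    simp only [this]
    exact Set.finite_empty

/-!
Given `X` and `δ > 0`, only finitely many points of `X` lie farther than `δ` from the diagonal.
Replace each of them by a nearby rational point and every other point by the diagonal point
`(0, 0)`. Matching the far points to their approximants and everything else to the diagonal
moves no point by more than `δ`, so the bottleneck profile vanishes at `δ` and the
Prokhorov distance is at most `δ`. The approximants form a countable family, and having only
finitely many off-diagonal points they have finite `p`-th moment.
-/

theorem pairCost_of_diag {u v : ℝ × ℝ} (hu : u.1 = u.2) (hv : v.1 = v.2) :
    pairCost u v = 0 :=
  if_pos ⟨hu, hv⟩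

theorem pairCost_le_dist (u v : ℝ × ℝ) : pairCost u v ≤ dist u v := by
  unfold pairCost
  split
  · exact dist_nonneg
  · exact le_rfl

theorem diagProj_eq_self {x : ℝ × ℝ} (h : x.1 = x.2) : diagProj x = x := by
  obtain ⟨a, b⟩ := x
  simp only at h
  simp [diagProj, h]

theorem BarB.pts_fst_eq_snd_of_notMem_offDiag (X : BarB) {n : ℕ} (h : n ∉ X.offDiag) :
    (X.pts n).1 = (X.pts n).2 :=
  (X.birth_le_death n).eq_of_not_lt h

theorem wassersteinB_emptyB_ne_top {p : ℝ} (hp : 0 < p) {X : BarB} (hX : X.offDiag.Finite) :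
    wassersteinB p X emptyB ≠ ⊤ := by
  refine ne_top_of_le_ne_top ?_ (iInf_le _ (Equiv.refl _))
  refine ENNReal.rpow_ne_top_of_nonneg (by positivity) ?_
  rw [tsum_eq_sum (s := hX.toFinset.map Function.Embedding.inl)]
  · exact ENNReal.sum_ne_top.mpr fun _ _ => ENNReal.ofReal_ne_top
  · rintro (n | n) hn
    · have hn : n ∉ X.offDiag := by simpa using hn
      show ENNReal.ofReal (pairCost (X.pts n) (emptyB.pts n) ^ p) = 0
      rw [pairCost_of_diag (X.pts_fst_eq_snd_of_notMem_offDiag hn) rfl, Real.zero_rpow hp.ne',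
        ENNReal.ofReal_zero]
    · show ENNReal.ofReal (pairCost (diagProj (emptyB.pts n)) (diagProj (X.pts n)) ^ p) = 0
      rw [pairCost_of_diag rfl rfl, Real.zero_rpow hp.ne', ENNReal.ofReal_zero]

theorem prokhorovB_le_of_bprofileB_lt {f : ℝ → ℝ} {X Y : BarB} {t : ℝ} (ht : 0 < t)
    (h : bprofileB X Y t < ENNReal.ofReal (f t)) : prokhorovB f X Y ≤ ENNReal.ofReal t :=
  iInf_le (fun s : {s : ℝ // 0 < s ∧ bprofileB X Y s < ENNReal.ofReal (f s)} =>
    ENNReal.ofReal s.1) ⟨t, ht, h⟩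

theorem bprofileB_eq_zero_of_forall_pairCost_le {X Y : BarB} {t : ℝ} (e : ℕ ⊕ ℕ ≃ ℕ ⊕ ℕ)
    (h : ∀ i, pairCost (matchDom X Y i) (matchCod X Y (e i)) ≤ t) : bprofileB X Y t = 0 := by
  refine le_antisymm ((iInf_le _ e).trans ?_) bot_le
  have hempty : {i | t < pairCost (matchDom X Y i) (matchCod X Y (e i))} = ∅ :=
    Set.eq_empty_of_forall_notMem fun i hi => (h i).not_gt hi
  simp [hempty]

/-- The matching that pairs the `n`-th points of the two diagrams for `n ∈ F` and sends every
other point to its own diagonal projection. -/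
noncomputable def swapOutside (F : Set ℕ) : ℕ ⊕ ℕ → ℕ ⊕ ℕ
  | .inl n => if n ∈ F then .inl n else .inr n
  | .inr n => if n ∈ F then .inr n else .inl n

theorem swapOutside_involutive (F : Set ℕ) : Function.Involutive (swapOutside F) := by
  rintro (n | n) <;> by_cases h : n ∈ F <;> simp [swapOutside, h]

theorem bprofileB_eq_zero_of_close {X Y : BarB} {t : ℝ} (ht : 0 ≤ t) (F : Set ℕ)
    (hF : ∀ n ∈ F, dist (X.pts n) (Y.pts n) ≤ t)
    (hX : ∀ n ∉ F, dist (X.pts n) (diagProj (X.pts n)) ≤ t)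
    (hY : ∀ n ∉ F, dist (Y.pts n) (diagProj (Y.pts n)) ≤ t) :
    bprofileB X Y t = 0 := by
  refine bprofileB_eq_zero_of_forall_pairCost_le (swapOutside_involutive F).toPerm ?_
  rintro (n | n) <;> by_cases hn : n ∈ F <;>
    simp only [Function.Involutive.coe_toPerm, swapOutside, hn, if_true, if_false]
  · exact (pairCost_le_dist _ _).trans (hF n hn)
  · exact (pairCost_le_dist _ _).trans (hX n hn)
  · rw [pairCost_of_diag rfl rfl]
    exact ht
  · exact (pairCost_le_dist _ _).trans (dist_comm (Y.pts n) _ ▸ hY n hn)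

theorem exists_rat_dist_lt_of_le (x : ℝ × ℝ) (hx : x.1 ≤ x.2) {δ : ℝ} (hδ : 0 < δ) :
    ∃ r : ℚ × ℚ, r.1 ≤ r.2 ∧ dist ((r.1 : ℝ), (r.2 : ℝ)) x < δ := by
  obtain ⟨a, ha₁, ha₂⟩ := exists_rat_btwn (show x.1 - δ < x.1 by linarith)
  obtain ⟨b, hb₁, hb₂⟩ := exists_rat_btwn (show x.2 < x.2 + δ by linarith)
  refine ⟨(a, b), by exact_mod_cast (ha₂.trans_le hx).trans hb₁ |>.le, ?_⟩
  rw [Prod.dist_eq, Real.dist_eq, Real.dist_eq]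
  exact max_lt (abs_sub_lt_iff.mpr ⟨by linarith, by linarith⟩)
    (abs_sub_lt_iff.mpr ⟨by linarith, by linarith⟩)

noncomputable def ratDiagram (r : ℕ →₀ ℚ × ℚ) : BarB where
  pts n := if (r n).1 ≤ (r n).2 then ((r n).1, (r n).2) else (0, 0)
  birth_le_death n := by
    split
    · exact Rat.cast_le.mpr ‹_›
    · exact le_rfl
  finitePers ε hε := by
    refine r.support.finite_toSet.subset fun n hn => ?_
    by_contra h
    simp [Finsupp.notMem_support_iff.mp h, diagProj_eq_self, hε.not_gt] at hn

theorem ratDiagram_pts_of_notMem_support {r : ℕ →₀ ℚ × ℚ} {n : ℕ} (h : n ∉ r.support) :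
    (ratDiagram r).pts n = (0, 0) := by
  simp [ratDiagram, Finsupp.notMem_support_iff.mp h]

theorem ratDiagram_offDiag_finite (r : ℕ →₀ ℚ × ℚ) : (ratDiagram r).offDiag.Finite :=
  r.support.finite_toSet.subset fun n hn => by
    by_contra h
    simp [BarB.offDiag, ratDiagram_pts_of_notMem_support h] at hn

theorem exists_ratDiagram_bprofileB_eq_zero (X : BarB) {δ : ℝ} (hδ : 0 < δ) :
    ∃ r : ℕ →₀ ℚ × ℚ, bprofileB X (ratDiagram r) δ = 0 := by
  set F := {n | δ < dist (X.pts n) (diagProj (X.pts n))}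
  choose g hg_le hg_dist using fun n => exists_rat_dist_lt_of_le (X.pts n) (X.birth_le_death n) hδ
  let r : ℕ →₀ ℚ × ℚ := Finsupp.ofSupportFinite (F.indicator g)
    ((X.finitePers δ hδ).subset Set.support_indicator_subset)
  refine ⟨r, bprofileB_eq_zero_of_close hδ.le F (fun n hn => ?_) (fun n hn => not_lt.mp hn)
    (fun n hn => ?_)⟩
  · have hr : r n = g n := Set.indicator_of_mem hn g
    simp only [ratDiagram, hr, hg_le n, if_true]
    exact dist_comm (X.pts n) _ ▸ (hg_dist n).le
  · have hr : r n = 0 := Set.indicator_of_notMem hn g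
    simp [ratDiagram, hr, diagProj_eq_self, hδ.le]

theorem barB_finite_moment_separable_general (p q c : ℝ) (hp : 1 ≤ p) (hc : 0 < c) :
    ∃ S : Set BarB, S.Countable ∧ (∀ Z ∈ S, wassersteinB p Z emptyB ≠ ⊤) ∧
      ∀ X : BarB, wassersteinB p X emptyB ≠ ⊤ →
        ∀ ε : ℝ, 0 < ε →
          ∃ Z ∈ S, prokhorovB (fun t => c * t ^ q) X Z < ENNReal.ofReal ε := by
  refine ⟨Set.range ratDiagram, Set.countable_range _, ?_, fun X _ ε hε => ?_⟩
  · rintro _ ⟨r, rfl⟩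
    exact wassersteinB_emptyB_ne_top (by linarith) (ratDiagram_offDiag_finite r)
  · obtain ⟨r, hr⟩ := exists_ratDiagram_bprofileB_eq_zero X (half_pos hε)
    refine ⟨ratDiagram r, ⟨r, rfl⟩, (prokhorovB_le_of_bprofileB_lt (half_pos hε) ?_).trans_lt ?_⟩
    · rw [hr]
      exact ENNReal.ofReal_pos.mpr (by positivity)
    · exact (ENNReal.ofReal_lt_ofReal_iff hε).mpr (half_lt_self hε)

/-- Separability of the space of diagrams in `B̄` with finite `p`-th moment
(`W_p(X, ∅) < ∞`), endowed with the `(c·t^q)`-Prokhorov distance: there is a countable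
subset `S` of the space such that every diagram of the space lies within distance `ε`
of some element of `S`, for every `ε > 0`. -/
theorem barB_finite_moment_separable (p q c : ℝ) (hp : 1 ≤ p) (hq : 0 < q) (hc : 0 < c) :
    ∃ S : Set BarB, S.Countable ∧ (∀ Z ∈ S, wassersteinB p Z emptyB ≠ ⊤) ∧
      ∀ X : BarB, wassersteinB p X emptyB ≠ ⊤ →
        ∀ ε : ℝ, 0 < ε →
          ∃ Z ∈ S, prokhorovB (fun t => c * t ^ q) X Z < ENNReal.ofReal ε :=
  barB_finite_moment_separable_general p q c hp hc
end
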